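/- arXiv:2505.01011 — 7 statements merged into one kernel-verified Lean document; each statement's English description precedes it below -/
import Mathlib

section
/- For any direction c ∈ Fin d, layer α ∈ Fin r and node j ∈ Fin N, the function t ↦ ε_Σ(Q with the single entry Q(c)(α)(j) replaced by Q(c)(α)(j) + t) has derivative at t = 0 equal to (1/N^d) ∑_{i : i(c) = j} R(Q)(i) · ∏_{s ≠ c} Q(s)(α)(i(s)). -/
open Finset

/-- Canonical-decomposition approximation:
`F(Q)(i) = ∑ α, ∏ s, Q s α (i s)`. -/
noncomputable def capF (d N r : ℕ) (Q : Fin d → Fin r → Fin N → ℝ)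
    (i : Fin d → Fin N) : ℝ :=
  ∑ α : Fin r, ∏ s : Fin d, Q s α (i s)

/-- Residual `R(Q)(i) = F(Q)(i) - T(i)`. -/
noncomputable def resid (d N r : ℕ) (T : (Fin d → Fin N) → ℝ)
    (Q : Fin d → Fin r → Fin N → ℝ) (i : Fin d → Fin N) : ℝ :=
  capF d N r Q i - T i

/-- Global discrepancy `ε_Σ(Q) = (1/(2 N^d)) ∑ i, R(Q)(i)^2`. -/
noncomputable def epsGlobal (d N r : ℕ) (T : (Fin d → Fin N) → ℝ)
    (Q : Fin d → Fin r → Fin N → ℝ) : ℝ :=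
  (1 / (2 * (N : ℝ) ^ d)) * ∑ i : Fin d → Fin N, (resid d N r T Q i) ^ 2

/-- Local discrepancy on the hyperplane `i c = j`:
`ε_{c,j}(Q) = (1/(2 N^(d-1))) ∑_{i : i c = j} R(Q)(i)^2`. -/
noncomputable def epsLocal (d N r : ℕ) (T : (Fin d → Fin N) → ℝ)
    (Q : Fin d → Fin r → Fin N → ℝ) (c : Fin d) (j : Fin N) : ℝ :=
  (1 / (2 * (N : ℝ) ^ (d - 1))) *
    ∑ i ∈ Finset.univ.filter (fun i : Fin d → Fin N => i c = j),
      (resid d N r T Q i) ^ 2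

/-- `Q[c,j := v]`: replace the core vector of direction `c` at node `j` by `v`. -/
def updVec (d N r : ℕ) (Q : Fin d → Fin r → Fin N → ℝ) (c : Fin d) (j : Fin N)
    (v : Fin r → ℝ) : Fin d → Fin r → Fin N → ℝ :=
  fun s α k => if s = c ∧ k = j then v α else Q s α k

/-- `Q` with the single entry `Q c α j` replaced by `Q c α j + t`. -/
def updOne (d N r : ℕ) (Q : Fin d → Fin r → Fin N → ℝ) (c : Fin d) (α : Fin r)
    (j : Fin N) (t : ℝ) : Fin d → Fin r → Fin N → ℝ :=
  fun s β k => if s = c ∧ β = α ∧ k = j then Q c α j + t else Q s β k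

/-! Moving the entry `Q c α j` by `t` moves each residual `R(Q)(i)` affinely in `t`: only the
`α`-th rank-one term changes, and only on the hyperplane `i c = j`, where its slope is
`∏_{s ≠ c} Q s α (i s)`. Hence `ε_Σ` is a quadratic polynomial in `t`, and its derivative at `0`
is `(1/N^d) ∑ R · slope`. -/

theorem Finset.prod_update_add {ι R : Type*} [Fintype ι] [DecidableEq ι] [CommRing R]
    (f : ι → R) (c : ι) (t : R) :
    ∏ s, Function.update f c (f c + t) s = ∏ s, f s + t * ∏ s ∈ univ.erase c, f s := by
  rw [prod_update_of_mem (mem_univ c), sdiff_singleton_eq_erase,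
    ← mul_prod_erase univ f (mem_univ c)]
  ring

section updOne

variable {d N r : ℕ} (Q : Fin d → Fin r → Fin N → ℝ) (c : Fin d) (α : Fin r) (j : Fin N)
  (t : ℝ) (i : Fin d → Fin N)

lemma prod_updOne (β : Fin r) :
    ∏ s, updOne d N r Q c α j t s β (i s) =
      ∏ s, Q s β (i s) + if β = α ∧ i c = j then t * ∏ s ∈ univ.erase c, Q s α (i s) else 0 := by
  split_ifs with h
  · obtain ⟨rfl, hij⟩ := h
    rw [← Finset.prod_update_add]
    refine prod_congr rfl fun s _ => ?_
    by_cases hs : s = c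
    · subst hs; simp [updOne, hij]
    · simp [updOne, hs]
  · rw [add_zero]
    refine prod_congr rfl fun s _ => ?_
    simp only [updOne]
    rw [if_neg]
    rintro ⟨rfl, rfl, rfl⟩
    exact h ⟨rfl, rfl⟩

lemma resid_updOne (T : (Fin d → Fin N) → ℝ) :
    resid d N r T (updOne d N r Q c α j t) i =
      resid d N r T Q i + t * if i c = j then ∏ s ∈ univ.erase c, Q s α (i s) else 0 := by
  simp only [resid, capF, prod_updOne, sum_add_distrib, ite_and, sum_ite_eq', mem_univ, if_true,
    mul_ite, mul_zero]
  ring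

end updOne

theorem hasDerivAt_sum_sq_add_mul {ι : Type*} [Fintype ι] (a b : ι → ℝ) :
    HasDerivAt (fun t : ℝ => ∑ i, (a i + t * b i) ^ 2) (2 * ∑ i, a i * b i) 0 := by
  rw [mul_sum]
  refine HasDerivAt.fun_sum fun i _ => ?_
  simpa [mul_assoc] using (((hasDerivAt_id (0 : ℝ)).mul_const (b i)).const_add (a i)).fun_pow 2

theorem deriv_global_discrepancy_general (d N r : ℕ)
    (T : (Fin d → Fin N) → ℝ) (Q : Fin d → Fin r → Fin N → ℝ)
    (c : Fin d) (α : Fin r) (j : Fin N) :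
    HasDerivAt (fun t : ℝ => epsGlobal d N r T (updOne d N r Q c α j t))
      ((1 / (N : ℝ) ^ d) *
        ∑ i ∈ Finset.univ.filter (fun i : Fin d → Fin N => i c = j),
          resid d N r T Q i * ∏ s ∈ Finset.univ.erase c, Q s α (i s)) 0 := by
  simp only [epsGlobal, resid_updOne]
  refine ((hasDerivAt_sum_sq_add_mul _ _).const_mul (1 / (2 * (N : ℝ) ^ d))).congr_deriv ?_
  rw [sum_filter]
  simp only [mul_ite, mul_zero]
  ring

theorem deriv_global_discrepancy (d N r : ℕ) (hd : 0 < d) (hN : 0 < N)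
    (hr : 0 < r) (T : (Fin d → Fin N) → ℝ) (Q : Fin d → Fin r → Fin N → ℝ)
    (c : Fin d) (α : Fin r) (j : Fin N) :
    HasDerivAt (fun t : ℝ => epsGlobal d N r T (updOne d N r Q c α j t))
      ((1 / (N : ℝ) ^ d) *
        ∑ i ∈ Finset.univ.filter (fun i : Fin d → Fin N => i c = j),
          resid d N r T Q i * ∏ s ∈ Finset.univ.erase c, Q s α (i s)) 0 :=
  deriv_global_discrepancy_general d N r T Q c α j
end

section
/- For any direction c ∈ Fin d, layer α ∈ Fin r and node j ∈ Fin N, the partial derivative of the global discrepancy with respect to the core entry Q(c)(α)(j) equals 1/N times the partial derivative of the local discrepancy on the corresponding hyperplane: the derivative at t = 0 of t ↦ ε_Σ(Q with Q(c)(α)(j) replaced by Q(c)(α)(j) + t) equals (1/N) times the derivative at t = 0 of t ↦ ε_{c,j}(Q with Q(c)(α)(j) replaced by Q(c)(α)(j) + t). -/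
open Finset

theorem deriv_global_eq_inv_N_mul_deriv_local (d N r : ℕ) (hd : 0 < d)
    (hN : 0 < N) (hr : 0 < r) (T : (Fin d → Fin N) → ℝ)
    (Q : Fin d → Fin r → Fin N → ℝ) (c : Fin d) (α : Fin r) (j : Fin N) :
    deriv (fun t : ℝ => epsGlobal d N r T (updOne d N r Q c α j t)) 0 =
      (1 / (N : ℝ)) *
        deriv (fun t : ℝ => epsLocal d N r T (updOne d N r Q c α j t) c j) 0 := by
  classical
  set g : ℝ → ℝ := fun t =>
    ∑ i ∈ Finset.univ.filter (fun i : Fin d → Fin N => i c = j),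
      (resid d N r T (updOne d N r Q c α j t) i) ^ 2 with hg
  set C : ℝ :=
    ∑ i ∈ Finset.univ.filter (fun i : Fin d → Fin N => ¬ i c = j),
      (resid d N r T Q i) ^ 2 with hC
  have hconst : ∀ t : ℝ, ∀ i ∈ Finset.univ.filter (fun i : Fin d → Fin N => ¬ i c = j),
      resid d N r T (updOne d N r Q c α j t) i = resid d N r T Q i := by
    intro t i hi
    simp only [Finset.mem_filter] at hi
    unfold resid capF updOne
    congr 1
    refine Finset.sum_congr rfl fun β _ => Finset.prod_congr rfl fun s _ => ?_
    by_cases hs : s = c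
    · subst hs; simp [hi.2]
    · simp [hs]
  have hsplit : ∀ t : ℝ,
      ∑ i : Fin d → Fin N, (resid d N r T (updOne d N r Q c α j t) i) ^ 2 = g t + C := by
    intro t
    rw [hg, hC, ← Finset.sum_filter_add_sum_filter_not Finset.univ
      (fun i : Fin d → Fin N => i c = j)]
    congr 1
    exact Finset.sum_congr rfl fun i hi => by rw [hconst t i hi]
  have hG : (fun t : ℝ => epsGlobal d N r T (updOne d N r Q c α j t))
      = fun t => (1 / (2 * (N : ℝ) ^ d)) * (g t + C) := by
    funext t; unfold epsGlobal; rw [hsplit t]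
  have hL : (fun t : ℝ => epsLocal d N r T (updOne d N r Q c α j t) c j)
      = fun t => (1 / (2 * (N : ℝ) ^ (d - 1))) * g t := by
    funext t; rfl
  rw [hG, hL, deriv_const_mul_field, deriv_const_mul_field]
  have : deriv (fun t => g t + C) 0 = deriv g 0 := by
    simp [deriv_add_const]
  rw [this]
  have hNd : (N : ℝ) ^ d = (N : ℝ) * (N : ℝ) ^ (d - 1) := by
    rw [← pow_succ']
    congr 1
    omega
  rw [hNd]
  have hN' : (N : ℝ) ≠ 0 := by positivity
  have hN'' : (N : ℝ) ^ (d - 1) ≠ 0 := by positivity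
  field_simp
end

section
/- (Theorem 1) If the cores Q are such that for every direction c ∈ Fin d, every node j ∈ Fin N and every layer α ∈ Fin r the derivative at t = 0 of t ↦ ε_{c,j}(Q with Q(c)(α)(j) replaced by Q(c)(α)(j) + t) is zero, then Q is a stationary point of the global discrepancy: for every c, j, α the derivative at t = 0 of t ↦ ε_Σ(Q with Q(c)(α)(j) replaced by Q(c)(α)(j) + t) is zero. -/
open Finset

/-
Moving a single entry `Q c α j` only changes the residual on the hyperplane `i c = j`, so among
the local discrepancies `ε_{c,j'}` only `ε_{c,j}` depends on it. Splitting the global sum over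
the hyperplanes `i c = j'` gives `ε_Σ = (1/N) ∑_{j'} ε_{c,j'}`, hence the derivative of `ε_Σ` is
`1/N` times that of `ε_{c,j}`, which vanishes.
-/

section

variable {d N r : ℕ}

theorem updOne_apply_of_not_and (Q : Fin d → Fin r → Fin N → ℝ) {c : Fin d} {j : Fin N}
    (α : Fin r) (t : ℝ) {s : Fin d} (β : Fin r) {k : Fin N} (h : ¬(s = c ∧ k = j)) :
    updOne d N r Q c α j t s β k = Q s β k :=
  if_neg fun ⟨hs, _, hk⟩ => h ⟨hs, hk⟩

theorem resid_updOne_of_ne (T : (Fin d → Fin N) → ℝ) (Q : Fin d → Fin r → Fin N → ℝ)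
    {c : Fin d} {j : Fin N} (α : Fin r) (t : ℝ) {i : Fin d → Fin N} (hi : i c ≠ j) :
    resid d N r T (updOne d N r Q c α j t) i = resid d N r T Q i := by
  unfold resid capF
  congr 1
  refine sum_congr rfl fun β _ => prod_congr rfl fun s _ => ?_
  exact updOne_apply_of_not_and Q α t β fun ⟨hs, hk⟩ => hi (hs ▸ hk)

theorem epsLocal_updOne_of_ne (T : (Fin d → Fin N) → ℝ) (Q : Fin d → Fin r → Fin N → ℝ)
    (c : Fin d) {j j' : Fin N} (α : Fin r) (t : ℝ) (hj : j' ≠ j) :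
    epsLocal d N r T (updOne d N r Q c α j t) c j' = epsLocal d N r T Q c j' := by
  unfold epsLocal
  congr 1
  refine sum_congr rfl fun i hi => ?_
  rw [resid_updOne_of_ne T Q α t ((mem_filter.mp hi).2.trans_ne hj)]

theorem epsGlobal_eq_sum_epsLocal (T : (Fin d → Fin N) → ℝ) (Q : Fin d → Fin r → Fin N → ℝ)
    (c : Fin d) :
    epsGlobal d N r T Q = (1 / (N : ℝ)) * ∑ j : Fin N, epsLocal d N r T Q c j := by
  have hpow : (N : ℝ) ^ d = N * N ^ (d - 1) := by
    rw [← pow_succ', Nat.sub_add_cancel c.pos]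
  unfold epsGlobal epsLocal
  rw [← sum_fiberwise univ (fun i : Fin d → Fin N => i c), mul_sum, mul_sum, hpow]
  refine sum_congr rfl fun _ _ => ?_
  ring

end

theorem stationary_local_implies_stationary_global_general (d N r : ℕ) (T : (Fin d → Fin N) → ℝ)
    (Q : Fin d → Fin r → Fin N → ℝ)
    (hloc : ∀ (c : Fin d) (j : Fin N) (α : Fin r),
      HasDerivAt (fun t : ℝ => epsLocal d N r T (updOne d N r Q c α j t) c j) 0 0) :
    ∀ (c : Fin d) (j : Fin N) (α : Fin r),
      HasDerivAt (fun t : ℝ => epsGlobal d N r T (updOne d N r Q c α j t)) 0 0 := by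
  intro c j α
  have hlocal : ∀ j' : Fin N,
      HasDerivAt (fun t : ℝ => epsLocal d N r T (updOne d N r Q c α j t) c j') 0 0 := by
    intro j'
    by_cases hj : j' = j
    · exact hj ▸ hloc c j' α
    · simpa only [epsLocal_updOne_of_ne T Q c α _ hj] using hasDerivAt_const 0 _
  simpa only [epsGlobal_eq_sum_epsLocal T _ c, sum_const_zero, mul_zero] using
    (HasDerivAt.fun_sum fun j' _ => hlocal j').const_mul (1 / (N : ℝ))

theorem stationary_local_implies_stationary_global (d N r : ℕ) (hd : 0 < d)
    (hN : 0 < N) (hr : 0 < r) (T : (Fin d → Fin N) → ℝ)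
    (Q : Fin d → Fin r → Fin N → ℝ)
    (hloc : ∀ (c : Fin d) (j : Fin N) (α : Fin r),
      HasDerivAt (fun t : ℝ => epsLocal d N r T (updOne d N r Q c α j t) c j) 0 0) :
    ∀ (c : Fin d) (j : Fin N) (α : Fin r),
      HasDerivAt (fun t : ℝ => epsGlobal d N r T (updOne d N r Q c α j t)) 0 0 :=
  stationary_local_implies_stationary_global_general d N r T Q hloc
end

section
/- If the global discrepancy attains a local minimum at the cores Q (as a function on the space of all cores), then for every direction c ∈ Fin d and node j ∈ Fin N the function v ↦ ε_{c,j}(Q[c,j := v]) on ℝ^r attains a local minimum at the vector v₀ with v₀(α) = Q(c)(α)(j). -/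
open Finset

/-!
Replacing the core vector `Q c · j` only changes the residual on the hyperplane `i c = j`, so
along such replacements the global discrepancy is `N⁻¹ · ε_{c,j}` plus a constant. The replacement
is continuous in the new vector, hence a local minimum of `ε_Σ` pulls back to a local minimum of
`ε_{c,j}`.
-/

theorem IsLocalMin.of_const_mul_add {X : Type*} [TopologicalSpace X] {f : X → ℝ} {x₀ : X}
    {a b : ℝ} (ha : 0 < a) (h : IsLocalMin (fun x => a * f x + b) x₀) : IsLocalMin f x₀ :=
  Filter.Eventually.mono h fun _ hx => le_of_mul_le_mul_left (by linarith) ha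

section

variable {d N r : ℕ} (T : (Fin d → Fin N) → ℝ) (Q : Fin d → Fin r → Fin N → ℝ)
  (c : Fin d) (j : Fin N)

theorem updVec_self : updVec d N r Q c j (fun α => Q c α j) = Q := by
  funext s α k
  by_cases h : s = c ∧ k = j
  · obtain ⟨rfl, rfl⟩ := h
    simp [updVec]
  · simp [updVec, h]

theorem continuous_updVec : Continuous (updVec d N r Q c j) := by
  refine continuous_pi fun s => continuous_pi fun α => continuous_pi fun k => ?_
  by_cases h : s = c ∧ k = j
  · simpa [updVec, h] using continuous_apply α
  · simpa [updVec, h] using continuous_const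

theorem resid_updVec_of_ne (v : Fin r → ℝ) {i : Fin d → Fin N} (hi : i c ≠ j) :
    resid d N r T (updVec d N r Q c j v) i = resid d N r T Q i := by
  have hs : ∀ s, ¬(s = c ∧ i s = j) := by
    rintro s ⟨rfl, hs⟩
    exact hi hs
  simp [resid, capF, updVec, hs]

theorem epsGlobal_eq_inv_mul_epsLocal_add :
    epsGlobal d N r T Q = (N : ℝ)⁻¹ * epsLocal d N r T Q c j +
      (2 * (N : ℝ) ^ d)⁻¹ * ∑ i with i c ≠ j, resid d N r T Q i ^ 2 := by
  have hN : (N : ℝ) ≠ 0 := Nat.cast_ne_zero.mpr j.pos.ne'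
  have hNd : (N : ℝ) ^ d = N * (N : ℝ) ^ (d - 1) := by
    rw [← pow_succ', Nat.sub_add_cancel c.pos]
  rw [epsGlobal, epsLocal, ← sum_filter_add_sum_filter_not univ (fun i => i c = j), hNd]
  field_simp

theorem epsGlobal_updVec (v : Fin r → ℝ) :
    epsGlobal d N r T (updVec d N r Q c j v) =
      (N : ℝ)⁻¹ * epsLocal d N r T (updVec d N r Q c j v) c j +
        (2 * (N : ℝ) ^ d)⁻¹ * ∑ i with i c ≠ j, resid d N r T Q i ^ 2 := by
  rw [epsGlobal_eq_inv_mul_epsLocal_add T _ c j]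
  congr 2
  refine sum_congr rfl fun i hi => ?_
  rw [resid_updVec_of_ne T Q c j v (mem_filter.mp hi).2]

end

theorem isLocalMin_global_implies_isLocalMin_local_general (d N r : ℕ) (T : (Fin d → Fin N) → ℝ)
    (Q : Fin d → Fin r → Fin N → ℝ)
    (hmin : IsLocalMin (fun Q' : Fin d → Fin r → Fin N → ℝ => epsGlobal d N r T Q') Q) :
    ∀ (c : Fin d) (j : Fin N),
      IsLocalMin (fun v : Fin r → ℝ => epsLocal d N r T (updVec d N r Q c j v) c j)
        (fun α => Q c α j) := by
  intro c j
  have hglobal := IsLocalMin.comp_continuous (f := epsGlobal d N r T)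
    (b := fun α => Q c α j) (by rwa [updVec_self]) (continuous_updVec Q c j).continuousAt
  simp only [Function.comp_def, epsGlobal_updVec] at hglobal
  exact hglobal.of_const_mul_add (inv_pos.mpr (Nat.cast_pos.mpr j.pos))

theorem isLocalMin_global_implies_isLocalMin_local (d N r : ℕ) (hd : 0 < d)
    (hN : 0 < N) (hr : 0 < r) (T : (Fin d → Fin N) → ℝ)
    (Q : Fin d → Fin r → Fin N → ℝ)
    (hmin : IsLocalMin (fun Q' : Fin d → Fin r → Fin N → ℝ => epsGlobal d N r T Q') Q) :
    ∀ (c : Fin d) (j : Fin N),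
      IsLocalMin (fun v : Fin r → ℝ => epsLocal d N r T (updVec d N r Q c j v) c j)
        (fun α => Q c α j) :=
  isLocalMin_global_implies_isLocalMin_local_general d N r T Q hmin
end

section
/- The local discrepancy restricted to the core vector at (c,j) is an explicit quadratic function: for every v : Fin r → ℝ, ε_{c,j}(Q[c,j := v]) = (1/2) ∑_{β,γ} H(β,γ) v(β) v(γ) − ∑_{γ} φ(γ) v(γ) + (1/(2·N^{d−1})) ∑_{i : i(c) = j} T(i)², where H(β,γ) = (1/N^{d−1}) ∑_{i : i(c) = j} (∏_{s ≠ c} Q(s)(β)(i(s))) · (∏_{s ≠ c} Q(s)(γ)(i(s))) and φ(γ) = (1/N^{d−1}) ∑_{i : i(c) = j} (∏_{s ≠ c} Q(s)(γ)(i(s))) · T(i). -/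
open Finset

theorem local_discrepancy_quadratic (d N r : ℕ) (hd : 0 < d) (hN : 0 < N)
    (hr : 0 < r) (T : (Fin d → Fin N) → ℝ) (Q : Fin d → Fin r → Fin N → ℝ)
    (c : Fin d) (j : Fin N) (H : Fin r → Fin r → ℝ) (φ : Fin r → ℝ)
    (hH : ∀ β γ : Fin r, H β γ =
      (1 / (N : ℝ) ^ (d - 1)) *
        ∑ i ∈ Finset.univ.filter (fun i : Fin d → Fin N => i c = j),
          (∏ s ∈ Finset.univ.erase c, Q s β (i s)) *
            (∏ s ∈ Finset.univ.erase c, Q s γ (i s)))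
    (hφ : ∀ γ : Fin r, φ γ =
      (1 / (N : ℝ) ^ (d - 1)) *
        ∑ i ∈ Finset.univ.filter (fun i : Fin d → Fin N => i c = j),
          (∏ s ∈ Finset.univ.erase c, Q s γ (i s)) * T i) :
    ∀ v : Fin r → ℝ,
      epsLocal d N r T (updVec d N r Q c j v) c j =
        (1 / 2) * (∑ β : Fin r, ∑ γ : Fin r, H β γ * v β * v γ)
          - (∑ γ : Fin r, φ γ * v γ)
          + (1 / (2 * (N : ℝ) ^ (d - 1))) *
              ∑ i ∈ Finset.univ.filter (fun i : Fin d → Fin N => i c = j),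
                (T i) ^ 2 := by
  classical
  intro v
  set S : Finset (Fin d → Fin N) :=
    Finset.univ.filter (fun i : Fin d → Fin N => i c = j) with hS
  have key : ∀ i ∈ S, resid d N r T (updVec d N r Q c j v) i
      = (∑ α : Fin r, v α * ∏ s ∈ Finset.univ.erase c, Q s α (i s)) - T i := by
    intro i hi
    have hic : i c = j := by
      have := hi; rw [hS, Finset.mem_filter] at this; exact this.2
    unfold resid capF
    congr 1
    refine Finset.sum_congr rfl fun α _ => ?_
    rw [← Finset.mul_prod_erase Finset.univ _ (Finset.mem_univ c)]
    refine congrArg₂ (· * ·) ?_ (Finset.prod_congr rfl fun s hs => ?_)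
    · simp [updVec, hic]
    · simp [updVec, (Finset.mem_erase.mp hs).1]
  have swap : ∀ (f : Fin r → Fin r → (Fin d → Fin N) → ℝ),
      ∑ i ∈ S, ∑ β : Fin r, ∑ γ : Fin r, f β γ i
        = ∑ β : Fin r, ∑ γ : Fin r, ∑ i ∈ S, f β γ i := by
    intro f
    rw [Finset.sum_comm]
    exact Finset.sum_congr rfl fun β _ => Finset.sum_comm
  have h1 : (1 / (2 * (N : ℝ) ^ (d - 1))) *
        ∑ i ∈ S, (∑ α : Fin r, v α * ∏ s ∈ Finset.univ.erase c, Q s α (i s)) ^ 2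
      = (1 / 2) * (∑ β : Fin r, ∑ γ : Fin r, H β γ * v β * v γ) := by
    simp only [sq, Finset.sum_mul_sum, Finset.mul_sum, Finset.sum_mul, hH]
    rw [swap]
    exact Finset.sum_congr rfl fun β _ => Finset.sum_congr rfl fun γ _ =>
      Finset.sum_congr rfl fun i _ => by ring
  have h2 : (1 / (2 * (N : ℝ) ^ (d - 1))) *
        ∑ i ∈ S, 2 * ((∑ α : Fin r, v α * ∏ s ∈ Finset.univ.erase c, Q s α (i s)) * T i)
      = ∑ γ : Fin r, φ γ * v γ := by
    simp only [Finset.sum_mul, Finset.mul_sum, hφ]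
    rw [Finset.sum_comm]
    exact Finset.sum_congr rfl fun γ _ => Finset.sum_congr rfl fun i _ => by ring
  have expand : ∑ i ∈ S, (resid d N r T (updVec d N r Q c j v) i) ^ 2
      = (∑ i ∈ S, (∑ α : Fin r, v α * ∏ s ∈ Finset.univ.erase c, Q s α (i s)) ^ 2)
        - (∑ i ∈ S, 2 * ((∑ α : Fin r, v α * ∏ s ∈ Finset.univ.erase c, Q s α (i s)) * T i))
        + ∑ i ∈ S, (T i) ^ 2 := by
    rw [← Finset.sum_sub_distrib, ← Finset.sum_add_distrib]
    refine Finset.sum_congr rfl fun i hi => ?_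
    rw [key i hi]; ring
  simp only [epsLocal]
  rw [expand, mul_add, mul_sub, h1, h2]
end

section
/- The second mixed derivatives of the local discrepancy with respect to the core vector at (c,j) are constant and equal to the Gauss–Newton matrix: for every v : Fin r → ℝ and β, γ ∈ Fin r, the derivative at t = 0 of t ↦ (derivative at s = 0 of s ↦ ε_{c,j}(Q[c,j := v + t·e_β + s·e_γ])) equals H(β,γ) = (1/N^{d−1}) ∑_{i : i(c) = j} (∏_{s ≠ c} Q(s)(β)(i(s))) · (∏_{s ≠ c} Q(s)(γ)(i(s))); in particular it does not depend on v. -/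
open Finset

/-! On the hyperplane `i c = j` every term of `F(Q[c,j := w])(i)` contains exactly one entry
of the core vector at `(c,j)`, so the approximation is the linear form `w ⬝ᵥ P(i)` whose
coefficients `P(α)(i)` are the products of the other cores. Hence `ε_{c,j}(Q[c,j := w])` is a
quadratic polynomial in `w`, and its Hessian is the Gauss–Newton matrix `∑ᵢ P(i) P(i)ᵀ / N^(d-1)`. -/

section

variable {d N r : ℕ}

def restProd (Q : Fin d → Fin r → Fin N → ℝ) (c : Fin d) (α : Fin r)
    (i : Fin d → Fin N) : ℝ :=
  ∏ s ∈ univ.erase c, Q s α (i s)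

theorem capF_updVec_of_apply_eq (Q : Fin d → Fin r → Fin N → ℝ) (c : Fin d) (w : Fin r → ℝ)
    {i : Fin d → Fin N} : capF d N r (updVec d N r Q c (i c) w) i =
      w ⬝ᵥ fun α => restProd Q c α i := by
  refine sum_congr rfl fun α _ => ?_
  rw [← mul_prod_erase univ _ (mem_univ c)]
  congr 1
  · simp [updVec]
  · exact prod_congr rfl fun s hs => by simp [updVec, ne_of_mem_erase hs]

theorem epsLocal_updVec (T : (Fin d → Fin N) → ℝ) (Q : Fin d → Fin r → Fin N → ℝ)
    (c : Fin d) (j : Fin N) (w : Fin r → ℝ) :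
    epsLocal d N r T (updVec d N r Q c j w) c j =
      1 / (2 * (N : ℝ) ^ (d - 1)) * ∑ i ∈ univ.filter (fun i : Fin d → Fin N => i c = j),
        ((w ⬝ᵥ fun α => restProd Q c α i) - T i) ^ 2 := by
  unfold epsLocal resid
  congr 1
  refine sum_congr rfl fun i hi => ?_
  rw [← (mem_filter.mp hi).2, capF_updVec_of_apply_eq]

end

theorem hasDerivAt_sum_add_mul_sq {ι : Type*} (S : Finset ι) (a y : ι → ℝ) :
    HasDerivAt (fun s : ℝ => ∑ i ∈ S, (a i + s * y i) ^ 2) (2 * ∑ i ∈ S, a i * y i) 0 := by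
  rw [mul_sum]
  refine HasDerivAt.fun_sum fun i _ => ?_
  exact ((((hasDerivAt_id (0 : ℝ)).mul_const (y i)).const_add (a i)).pow 2).congr_deriv
    (by simp [mul_assoc])

theorem hasDerivAt_sum_add_mul_mul {ι : Type*} (S : Finset ι) (a x y : ι → ℝ) (t : ℝ) :
    HasDerivAt (fun u : ℝ => ∑ i ∈ S, (a i + u * x i) * y i) (∑ i ∈ S, x i * y i) t := by
  refine HasDerivAt.fun_sum fun i _ => ?_
  simpa using (((hasDerivAt_id t).mul_const (x i)).const_add (a i)).mul_const (y i)

theorem second_deriv_local_discrepancy_eq_GaussNewton_general (d N r : ℕ) (T : (Fin d → Fin N) → ℝ)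
    (Q : Fin d → Fin r → Fin N → ℝ) (c : Fin d) (j : Fin N)
    (H : Fin r → Fin r → ℝ)
    (hH : ∀ β γ : Fin r, H β γ =
      (1 / (N : ℝ) ^ (d - 1)) *
        ∑ i ∈ Finset.univ.filter (fun i : Fin d → Fin N => i c = j),
          (∏ s ∈ Finset.univ.erase c, Q s β (i s)) *
            (∏ s ∈ Finset.univ.erase c, Q s γ (i s))) :
    ∀ (v : Fin r → ℝ) (β γ : Fin r),
      HasDerivAt
        (fun t : ℝ =>
          deriv
            (fun s : ℝ =>
              epsLocal d N r T
                (updVec d N r Q c j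
                  (v + t • (Pi.single β 1 : Fin r → ℝ) + s • (Pi.single γ 1 : Fin r → ℝ))) c j) 0)
        (H β γ) 0 := by
  intro v β γ
  set C : ℝ := 1 / (2 * (N : ℝ) ^ (d - 1))
  set S := univ.filter (fun i : Fin d → Fin N => i c = j)
  set P : Fin r → (Fin d → Fin N) → ℝ := restProd Q c
  set A : (Fin d → Fin N) → ℝ := fun i => (v ⬝ᵥ fun α => P α i) - T i
  have first_deriv : ∀ t : ℝ, deriv (fun s : ℝ => epsLocal d N r T
      (updVec d N r Q c j (v + t • Pi.single β 1 + s • Pi.single γ 1)) c j) 0 =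
        C * (2 * ∑ i ∈ S, (A i + t * P β i) * P γ i) := by
    intro t
    have quadratic : (fun s : ℝ => epsLocal d N r T
        (updVec d N r Q c j (v + t • Pi.single β 1 + s • Pi.single γ 1)) c j) =
          fun s => C * ∑ i ∈ S, (A i + t * P β i + s * P γ i) ^ 2 := by
      funext s
      rw [epsLocal_updVec]
      refine congrArg (C * ·) (sum_congr rfl fun i _ => ?_)
      simp only [A, add_dotProduct, smul_dotProduct, single_dotProduct, smul_eq_mul, one_mul]
      ring
    rw [quadratic]
    exact ((hasDerivAt_sum_add_mul_sq S _ _).const_mul C).deriv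
  rw [funext first_deriv]
  refine (((hasDerivAt_sum_add_mul_mul S A (P β) (P γ) 0).const_mul 2).const_mul C).congr_deriv ?_
  rw [hH, ← mul_assoc]
  congr 1
  ring

theorem second_deriv_local_discrepancy_eq_GaussNewton (d N r : ℕ) (hd : 0 < d)
    (hN : 0 < N) (hr : 0 < r) (T : (Fin d → Fin N) → ℝ)
    (Q : Fin d → Fin r → Fin N → ℝ) (c : Fin d) (j : Fin N)
    (H : Fin r → Fin r → ℝ)
    (hH : ∀ β γ : Fin r, H β γ =
      (1 / (N : ℝ) ^ (d - 1)) *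
        ∑ i ∈ Finset.univ.filter (fun i : Fin d → Fin N => i c = j),
          (∏ s ∈ Finset.univ.erase c, Q s β (i s)) *
            (∏ s ∈ Finset.univ.erase c, Q s γ (i s))) :
    ∀ (v : Fin r → ℝ) (β γ : Fin r),
      HasDerivAt
        (fun t : ℝ =>
          deriv
            (fun s : ℝ =>
              epsLocal d N r T
                (updVec d N r Q c j
                  (v + t • (Pi.single β 1 : Fin r → ℝ) + s • (Pi.single γ 1 : Fin r → ℝ))) c j) 0)
        (H β γ) 0 :=
  second_deriv_local_discrepancy_eq_GaussNewton_general d N r T Q c j H hH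
end

section
/- (Stationarity of the ALS/Newton update) If the local Hessian matrix H with entries H(β,γ) = (1/N^{d−1}) ∑_{i : i(c) = j} (∏_{s ≠ c} Q(s)(β)(i(s))) · (∏_{s ≠ c} Q(s)(γ)(i(s))) is invertible, then the vector v* = H⁻¹ φ, where φ(γ) = (1/N^{d−1}) ∑_{i : i(c) = j} (∏_{s ≠ c} Q(s)(γ)(i(s))) · T(i), is a stationary point of the restricted local discrepancy: for every α ∈ Fin r, the derivative at t = 0 of t ↦ ε_{c,j}(Q[c,j := v* + t·e_α]) is zero. -/
/-! Along the line `v⋆ + t • e_α` every residual on the hyperplane `i c = j` is affine in `t`,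
with slope the product of the cores of the other directions. Hence the derivative at `t = 0` of
the local discrepancy is the `α`-th component of the gradient `H v⋆ - φ` of a linear
least-squares problem whose normal equations are `H v = φ`, and it vanishes at `v⋆ = H⁻¹ φ`. -/

open Finset

def otherCoresProd (d N r : ℕ) (Q : Fin d → Fin r → Fin N → ℝ) (c : Fin d) (β : Fin r)
    (i : Fin d → Fin N) : ℝ :=
  ∏ s ∈ univ.erase c, Q s β (i s)

lemma capF_updVec_of_apply_eq_s14 (d N r : ℕ) (Q : Fin d → Fin r → Fin N → ℝ) (c : Fin d)
    (j : Fin N) (v : Fin r → ℝ) {i : Fin d → Fin N} (hi : i c = j) :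
    capF d N r (updVec d N r Q c j v) i = ∑ β, v β * otherCoresProd d N r Q c β i := by
  refine sum_congr rfl fun β _ => ?_
  rw [← mul_prod_erase univ _ (mem_univ c)]
  congr 1
  · simp [updVec, hi]
  · exact prod_congr rfl fun s hs => by simp [updVec, (mem_erase.mp hs).1]

lemma resid_updVec_add_smul_single (d N r : ℕ) (T : (Fin d → Fin N) → ℝ)
    (Q : Fin d → Fin r → Fin N → ℝ) (c : Fin d) (j : Fin N) (v : Fin r → ℝ) (α : Fin r)
    (t : ℝ) {i : Fin d → Fin N} (hi : i c = j) :
    resid d N r T (updVec d N r Q c j (v + t • Pi.single α 1)) i =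
      resid d N r T (updVec d N r Q c j v) i + t * otherCoresProd d N r Q c α i := by
  simp only [resid, capF_updVec_of_apply_eq_s14 d N r Q c j _ hi, Pi.add_apply, Pi.smul_apply,
    smul_eq_mul, add_mul, sum_add_distrib, mul_assoc, ← mul_sum, Pi.single_apply, ite_mul,
    one_mul, zero_mul, sum_ite_eq', mem_univ, if_true]
  ring

lemma hasDerivAt_const_mul_sum_sq_add_mul {ι : Type*} (S : Finset ι) (κ : ℝ) (a p : ι → ℝ) :
    HasDerivAt (fun t : ℝ => κ * ∑ i ∈ S, (a i + t * p i) ^ 2)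
      (2 * κ * ∑ i ∈ S, a i * p i) 0 := by
  have hterm (i : ι) : HasDerivAt (fun t : ℝ => (a i + t * p i) ^ 2) (2 * a i * p i) 0 := by
    simpa using (((hasDerivAt_id (0 : ℝ)).mul_const (p i)).const_add (a i)).fun_pow 2
  refine ((HasDerivAt.fun_sum fun i _ => hterm i).const_mul κ).congr_deriv ?_
  rw [mul_sum, mul_sum]
  exact sum_congr rfl fun _ _ => by ring

/-- The left side is the `α`-th partial derivative of the least-squares functional
`v ↦ (κ/2) ∑ᵢ (∑ β, v β * P β i - y i)²`, and `G`, `b` are the Gram matrix and moment vector of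
the regressors `P`. -/
lemma sum_linear_sub_mul_eq_mulVec_sub {ι n : Type*} [Fintype n] (S : Finset ι) (κ : ℝ)
    (P : n → ι → ℝ) (y : ι → ℝ) (G : Matrix n n ℝ) (b : n → ℝ)
    (hG : ∀ β γ, G β γ = κ * ∑ i ∈ S, P β i * P γ i)
    (hb : ∀ γ, b γ = κ * ∑ i ∈ S, P γ i * y i) (v : n → ℝ) (α : n) :
    κ * ∑ i ∈ S, (∑ β, v β * P β i - y i) * P α i = (G.mulVec v - b) α := by
  simp only [Pi.sub_apply, Matrix.mulVec, dotProduct, hG, hb, sub_mul, sum_sub_distrib,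
    mul_sub, sum_mul, mul_sum]
  rw [sum_comm]
  congr 1
  · exact sum_congr rfl fun _ _ => sum_congr rfl fun _ _ => by ring
  · exact sum_congr rfl fun _ _ => by ring

lemma mulVec_nonsing_inv_mulVec {n R : Type*} [Fintype n] [DecidableEq n] [CommRing R]
    {G : Matrix n n R} (hG : IsUnit G) (b : n → R) : G.mulVec (G⁻¹.mulVec b) = b := by
  rw [Matrix.mulVec_mulVec, Matrix.mul_nonsing_inv G ((Matrix.isUnit_iff_isUnit_det G).mp hG),
    Matrix.one_mulVec]

theorem als_newton_update_stationary_general (d N r : ℕ) (T : (Fin d → Fin N) → ℝ)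
    (Q : Fin d → Fin r → Fin N → ℝ)
    (c : Fin d) (j : Fin N) (H : Matrix (Fin r) (Fin r) ℝ) (φ : Fin r → ℝ)
    (hH : ∀ β γ : Fin r, H β γ =
      (1 / (N : ℝ) ^ (d - 1)) *
        ∑ i ∈ Finset.univ.filter (fun i : Fin d → Fin N => i c = j),
          (∏ s ∈ Finset.univ.erase c, Q s β (i s)) *
            (∏ s ∈ Finset.univ.erase c, Q s γ (i s)))
    (hφ : ∀ γ : Fin r, φ γ =
      (1 / (N : ℝ) ^ (d - 1)) *
        ∑ i ∈ Finset.univ.filter (fun i : Fin d → Fin N => i c = j),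
          (∏ s ∈ Finset.univ.erase c, Q s γ (i s)) * T i)
    (hinv : IsUnit H) :
    ∀ α : Fin r,
      HasDerivAt
        (fun t : ℝ =>
          epsLocal d N r T
            (updVec d N r Q c j (H⁻¹.mulVec φ + t • (Pi.single α 1 : Fin r → ℝ))) c j)
        0 0 := by
  intro α
  set S := univ.filter fun i : Fin d → Fin N => i c = j
  set v := H⁻¹.mulVec φ
  set a := resid d N r T (updVec d N r Q c j v)
  have hε : (fun t : ℝ => epsLocal d N r T (updVec d N r Q c j (v + t • Pi.single α 1)) c j) =
      fun t => 1 / (2 * (N : ℝ) ^ (d - 1)) *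
        ∑ i ∈ S, (a i + t * otherCoresProd d N r Q c α i) ^ 2 :=
    funext fun t => congrArg _ <| sum_congr rfl fun i hi => by
      rw [resid_updVec_add_smul_single d N r T Q c j v α t (mem_filter.mp hi).2]
  have hstationary : 1 / (N : ℝ) ^ (d - 1) * ∑ i ∈ S, a i * otherCoresProd d N r Q c α i = 0 := by
    have ha : ∀ i ∈ S, a i = ∑ β, v β * otherCoresProd d N r Q c β i - T i := fun i hi => by
      simp only [a, resid, capF_updVec_of_apply_eq_s14 d N r Q c j v (mem_filter.mp hi).2]
    rw [sum_congr rfl fun i hi => by rw [ha i hi],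
      sum_linear_sub_mul_eq_mulVec_sub S _ (otherCoresProd d N r Q c) T H φ hH hφ,
      mulVec_nonsing_inv_mulVec hinv, sub_self, Pi.zero_apply]
  rw [hε]
  refine (hasDerivAt_const_mul_sum_sq_add_mul S _ a (otherCoresProd d N r Q c α)).congr_deriv ?_
  rw [← hstationary]
  field_simp

theorem als_newton_update_stationary (d N r : ℕ) (hd : 0 < d) (hN : 0 < N)
    (hr : 0 < r) (T : (Fin d → Fin N) → ℝ) (Q : Fin d → Fin r → Fin N → ℝ)
    (c : Fin d) (j : Fin N) (H : Matrix (Fin r) (Fin r) ℝ) (φ : Fin r → ℝ)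
    (hH : ∀ β γ : Fin r, H β γ =
      (1 / (N : ℝ) ^ (d - 1)) *
        ∑ i ∈ Finset.univ.filter (fun i : Fin d → Fin N => i c = j),
          (∏ s ∈ Finset.univ.erase c, Q s β (i s)) *
            (∏ s ∈ Finset.univ.erase c, Q s γ (i s)))
    (hφ : ∀ γ : Fin r, φ γ =
      (1 / (N : ℝ) ^ (d - 1)) *
        ∑ i ∈ Finset.univ.filter (fun i : Fin d → Fin N => i c = j),
          (∏ s ∈ Finset.univ.erase c, Q s γ (i s)) * T i)
    (hinv : IsUnit H) :
    ∀ α : Fin r,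
      HasDerivAt
        (fun t : ℝ =>
          epsLocal d N r T
            (updVec d N r Q c j (H⁻¹.mulVec φ + t • (Pi.single α 1 : Fin r → ℝ))) c j)
        0 0 :=
  als_newton_update_stationary_general d N r T Q c j H φ hH hφ hinv
end
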